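/- arXiv:2209.14699 — 4 statements merged into one kernel-verified Lean document; each statement's English description precedes it below -/
import Mathlib

section
/- Let $x, y \in \mathbb{R}^m$ with $y_l = 1$ for all $l$ (so $\mathbf{1}^\top y = m$), and let $e \in \mathbb{R}^m$ with $e_{\max} := \max_l |e_l| < 1$. Then the ratio $z = \frac{(\mathbf{1}^\top + e^\top)x}{(\mathbf{1}^\top + e^\top)y}$ satisfies $|z - z^*| \le \frac{z^*(\Sigma_x + \Sigma_{|x|})\,e_{\max}}{\Sigma_x(1 - e_{\max})}$, where $z^* = \Sigma_x/m$, provided $\Sigma_x = \sum_l x_l > 0$. -/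
/-!
Write `N = ∑ (1 + eₗ) xₗ` and `D = ∑ (1 + eₗ) = m + ∑ eₗ`. Clearing denominators,
`N m - D Σₓ = m ∑ eₗ xₗ - Σₓ ∑ eₗ`, whose absolute value is at most `m e_max (Σ_{|x|} + |Σₓ|)`,
while `D ≥ m (1 - e_max) > 0`. Hence `|N / D - Σₓ / m| ≤ e_max (Σ_{|x|} + |Σₓ|) / (m (1 - e_max))`,
which is the claimed bound once `z* = Σₓ / m` is cancelled against `Σₓ > 0`.
-/

open Finset

section PerturbedSums

variable {ι : Type*} [Fintype ι] {e : ι → ℝ} {ε : ℝ}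

lemma abs_sum_le_card_mul_of_abs_le (he : ∀ i, |e i| ≤ ε) :
    |∑ i, e i| ≤ Fintype.card ι * ε := by
  calc |∑ i, e i| ≤ ∑ i, |e i| := abs_sum_le_sum_abs _ _
    _ ≤ ∑ _i : ι, ε := sum_le_sum fun i _ => he i
    _ = Fintype.card ι * ε := by simp

lemma abs_sum_mul_le_mul_sum_abs_of_abs_le (he : ∀ i, |e i| ≤ ε) (x : ι → ℝ) :
    |∑ i, e i * x i| ≤ ε * ∑ i, |x i| := by
  calc |∑ i, e i * x i| ≤ ∑ i, |e i * x i| := abs_sum_le_sum_abs _ _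
    _ ≤ ∑ i, ε * |x i| := sum_le_sum fun i _ => by
        rw [abs_mul]; exact mul_le_mul_of_nonneg_right (he i) (abs_nonneg _)
    _ = ε * ∑ i, |x i| := (mul_sum _ _ _).symm

lemma sum_one_add_eq_card_add_sum (e : ι → ℝ) :
    ∑ i, (1 + e i) = Fintype.card ι + ∑ i, e i := by
  simp [sum_add_distrib]

lemma card_mul_one_sub_le_sum_one_add (he : ∀ i, |e i| ≤ ε) :
    Fintype.card ι * (1 - ε) ≤ ∑ i, (1 + e i) := by
  have := neg_le_of_abs_le (abs_sum_le_card_mul_of_abs_le he)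
  rw [sum_one_add_eq_card_add_sum]
  linarith

lemma sum_one_add_mul_mul_card_sub (e x : ι → ℝ) :
    (∑ i, (1 + e i) * x i) * Fintype.card ι - (∑ i, (1 + e i)) * ∑ i, x i =
      Fintype.card ι * ∑ i, e i * x i - (∑ i, x i) * ∑ i, e i := by
  rw [sum_one_add_eq_card_add_sum]
  simp only [add_mul, one_mul, sum_add_distrib]
  ring

lemma abs_perturbed_mean_sub_mean_le [Nonempty ι] (x : ι → ℝ) (he : ∀ i, |e i| ≤ ε)
    (hε : ε < 1) :
    |(∑ i, (1 + e i) * x i) / (∑ i, (1 + e i)) - (∑ i, x i) / Fintype.card ι| ≤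
      ε * (∑ i, |x i| + |∑ i, x i|) / (Fintype.card ι * (1 - ε)) := by
  set n : ℝ := (Fintype.card ι : ℝ)
  set S := ∑ i, x i
  set D := ∑ i, (1 + e i)
  have hn : 0 < n := Nat.cast_pos.mpr Fintype.card_pos
  have hD_lb : n * (1 - ε) ≤ D := card_mul_one_sub_le_sum_one_add he
  have hD : 0 < D := lt_of_lt_of_le (mul_pos hn (sub_pos.mpr hε)) hD_lb
  have hε0 : 0 ≤ ε := (abs_nonneg _).trans (he (Classical.arbitrary ι))
  have hnum : |(∑ i, (1 + e i) * x i) * n - D * S| ≤ n * (ε * (∑ i, |x i| + |S|)) := by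
    rw [sum_one_add_mul_mul_card_sub]
    calc |n * ∑ i, e i * x i - S * ∑ i, e i|
        ≤ n * |∑ i, e i * x i| + |S| * |∑ i, e i| := by
          simpa only [abs_mul, abs_of_pos hn] using
            abs_sub (n * ∑ i, e i * x i) (S * ∑ i, e i)
      _ ≤ n * (ε * ∑ i, |x i|) + |S| * (n * ε) := by
          gcongr
          exacts [abs_sum_mul_le_mul_sum_abs_of_abs_le he x, abs_sum_le_card_mul_of_abs_le he]
      _ = n * (ε * (∑ i, |x i| + |S|)) := by ring
  calc |(∑ i, (1 + e i) * x i) / D - S / n|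
      = |(∑ i, (1 + e i) * x i) * n - D * S| / (D * n) := by
        rw [div_sub_div _ _ hD.ne' hn.ne', abs_div, abs_of_pos (mul_pos hD hn)]
    _ ≤ n * (ε * (∑ i, |x i| + |S|)) / (D * n) := by gcongr
    _ = ε * (∑ i, |x i| + |S|) / D := by field_simp
    _ ≤ ε * (∑ i, |x i| + |S|) / (n * (1 - ε)) := by
        gcongr

end PerturbedSums

/-- Bound on the perturbed ratio: with `y = 1` and `|e_l| ≤ e_max < 1`, the ratio
`z = ((1ᵀ+eᵀ)x)/((1ᵀ+eᵀ)y)` satisfies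
`|z - z*| ≤ z*(Σ_x + Σ_{|x|}) e_max / (Σ_x (1 - e_max))`, where `z* = Σ_x/m`. -/
theorem perturbed_ratio_error_bound
    (m : ℕ) (hm : 0 < m)
    (x : Fin m → ℝ) (e : Fin m → ℝ) (emax : ℝ)
    (hemax : IsGreatest {r : ℝ | ∃ l, r = |e l|} emax)
    (hemax1 : emax < 1)
    (hx : 0 < ∑ l, x l) :
    |(∑ l, (1 + e l) * x l) / (∑ l, (1 + e l) * 1) - (∑ l, x l) / m| ≤
      ((∑ l, x l) / m) * ((∑ l, x l) + ∑ l, |x l|) * emax /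
        ((∑ l, x l) * (1 - emax)) := by
  have : NeZero m := ⟨hm.ne'⟩
  have hle : ∀ l, |e l| ≤ emax := fun l => hemax.2 ⟨l, rfl⟩
  have hbound := abs_perturbed_mean_sub_mean_le x hle hemax1
  simp only [Fintype.card_fin, abs_of_pos hx] at hbound
  simp only [mul_one]
  convert hbound using 1
  field_simp
  ring
end

section
/- For any nonnegative matrices $A, B$ of compatible dimensions with $B$ column-stochastic, the coefficient of ergodicity is sub-multiplicative under left multiplication: $\delta(AB) \le \delta(A)$, where $\delta(M) := \max_j \max_{i_1,i_2}|M(j,i_1) - M(j,i_2)|$. -/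
/-- The coefficient of ergodicity is non-increasing under right multiplication by a
column-stochastic matrix: `δ(AB) ≤ δ(A)`. -/
theorem ergodicity_coefficient_submultiplicative
    (n m p : ℕ) (A : Matrix (Fin n) (Fin m) ℝ) (B : Matrix (Fin m) (Fin p) ℝ)
    (hBnonneg : ∀ i j, 0 ≤ B i j)
    (hBcol : ∀ j, ∑ i, B i j = 1)
    (d : ℝ)
    (hδA : ∀ j i₁ i₂, |A j i₁ - A j i₂| ≤ d) :
    ∀ j i₁ i₂, |(A * B) j i₁ - (A * B) j i₂| ≤ d := by
  intro j i₁ i₂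
  have h1 : (A * B) j i₁ = ∑ k, ∑ l, A j k * (B k i₁ * B l i₂) := by
    simp only [Matrix.mul_apply]
    refine Finset.sum_congr rfl fun k _ => ?_
    rw [← Finset.mul_sum, ← Finset.mul_sum, hBcol, mul_one]
  have h2 : (A * B) j i₂ = ∑ k, ∑ l, A j l * (B k i₁ * B l i₂) := by
    simp only [Matrix.mul_apply]
    rw [Finset.sum_comm]
    refine Finset.sum_congr rfl fun l _ => ?_
    have : ∀ k, A j l * (B k i₁ * B l i₂) = (A j l * B l i₂) * B k i₁ := by
      intro k; ring
    simp only [this]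
    rw [← Finset.mul_sum, hBcol, mul_one]
  have key : (A * B) j i₁ - (A * B) j i₂
      = ∑ k, ∑ l, (A j k - A j l) * (B k i₁ * B l i₂) := by
    rw [h1, h2, ← Finset.sum_sub_distrib]
    refine Finset.sum_congr rfl fun k _ => ?_
    rw [← Finset.sum_sub_distrib]
    refine Finset.sum_congr rfl fun l _ => ?_
    ring
  rw [key]
  calc |∑ k, ∑ l, (A j k - A j l) * (B k i₁ * B l i₂)|
      ≤ ∑ k, ∑ l, |(A j k - A j l) * (B k i₁ * B l i₂)| := by
        refine (Finset.abs_sum_le_sum_abs _ _).trans ?_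
        exact Finset.sum_le_sum fun k _ => Finset.abs_sum_le_sum_abs _ _
    _ ≤ ∑ k, ∑ l, d * (B k i₁ * B l i₂) := by
        refine Finset.sum_le_sum fun k _ => Finset.sum_le_sum fun l _ => ?_
        rw [abs_mul, abs_of_nonneg (mul_nonneg (hBnonneg k i₁) (hBnonneg l i₂))]
        exact mul_le_mul_of_nonneg_right (hδA j k l)
          (mul_nonneg (hBnonneg k i₁) (hBnonneg l i₂))
    _ = d := by
        simp only [← Finset.mul_sum, hBcol, mul_one]
end

section
/- For column-stochastic matrices $L_k$ with $\delta(L_k) \to 0$ and rows $j$ along a subsequence $k \in \mathcal{K}$ satisfying $(L_k \mathbf{1})_j \ge m\,c^\lambda > 0$, the ratios $z_j[k] = (L_k x)_j / (L_k \mathbf{1})_j$ converge along $\mathcal{K}$ to $\frac{1}{m}\sum_l x_l$, for any fixed $x \in \mathbb{R}^m$. -/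
/-- Deterministic skeleton of the convergence theorem: if `L k` are column-stochastic
with coefficient of ergodicity tending to `0`, and along an infinite subsequence `K`
row `j` satisfies `(L k 1)_j ≥ m c^λ > 0`, then the ratios `(L k x)_j / (L k 1)_j`
converge along `K` to the average `(∑ x)/m`. -/
theorem ratio_converges_along_subsequence
    (m : ℕ) (hm : 0 < m)
    (L : ℕ → Matrix (Fin m) (Fin m) ℝ)
    (hLnonneg : ∀ k i j, 0 ≤ L k i j)
    (hLcol : ∀ k i, ∑ j, L k j i = 1)
    (hδ : ∀ ε > 0, ∃ N, ∀ k ≥ N, ∀ j i₁ i₂, |L k j i₁ - L k j i₂| < ε)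
    (K : Set ℕ) (hK : K.Infinite)
    (clam : ℝ) (hclam : 0 < clam)
    (j : Fin m)
    (hrow : ∀ k ∈ K, (m : ℝ) * clam ≤ ∑ i, L k j i)
    (x : Fin m → ℝ) :
    ∀ ε > 0, ∃ N, ∀ k ∈ K, N ≤ k →
      |(∑ i, L k j i * x i) / (∑ i, L k j i) - (∑ l, x l) / m| < ε := by
  intro ε hε
  set X : ℝ := ∑ i, |x i| with hXdef
  have hX : 0 ≤ X := Finset.sum_nonneg fun i _ => abs_nonneg _
  have hmpos : (0:ℝ) < m := by exact_mod_cast hm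
  have hmc : (0:ℝ) < (m:ℝ) * clam := mul_pos hmpos hclam
  have hX1 : (0:ℝ) < X + 1 := by linarith
  set ε' : ℝ := ε * ((m:ℝ) * clam) / (X + 1) with hε'def
  have hε' : 0 < ε' := div_pos (mul_pos hε hmc) hX1
  obtain ⟨N, hN⟩ := hδ ε' hε'
  refine ⟨N, fun k hkK hkN => ?_⟩
  set S : ℝ := ∑ i, L k j i with hSdef
  have hS : (m:ℝ) * clam ≤ S := hrow k hkK
  have hSpos : 0 < S := lt_of_lt_of_le hmc hS
  set T : ℝ := ∑ l, x l with hTdef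
  set num : ℝ := ∑ i, L k j i * x i with hnumdef
  have key : num * m - S * T = ∑ i, ∑ l, (L k j i - L k j l) * x i := by
    have h1 : ∀ i : Fin m, ∑ l : Fin m, (L k j i - L k j l) * x i
        = ((m:ℝ) * L k j i - S) * x i := by
      intro i
      rw [← Finset.sum_mul]
      congr 1
      rw [Finset.sum_sub_distrib, Finset.sum_const, Finset.card_univ,
        Fintype.card_fin, nsmul_eq_mul, hSdef]
    simp_rw [h1, sub_mul, mul_assoc, Finset.sum_sub_distrib, ← Finset.mul_sum]
    rw [← hnumdef, ← hTdef]
    ring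
  have hbound : |num * m - S * T| ≤ (m:ℝ) * ε' * X := by
    rw [key]
    calc |∑ i, ∑ l, (L k j i - L k j l) * x i|
        ≤ ∑ i, |∑ l, (L k j i - L k j l) * x i| := Finset.abs_sum_le_sum_abs _ _
      _ ≤ ∑ i, ∑ l, |(L k j i - L k j l) * x i| :=
          Finset.sum_le_sum fun i _ => Finset.abs_sum_le_sum_abs _ _
      _ ≤ ∑ i, ∑ _l : Fin m, ε' * |x i| := by
          refine Finset.sum_le_sum fun i _ => Finset.sum_le_sum fun l _ => ?_
          rw [abs_mul]
          exact mul_le_mul_of_nonneg_right (le_of_lt (hN k hkN j i l)) (abs_nonneg _)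
      _ = (m:ℝ) * ε' * X := by
          simp only [Finset.sum_const, Finset.card_univ, Fintype.card_fin,
            nsmul_eq_mul, ← Finset.mul_sum, ← hXdef]
          ring
  have hlt : (m:ℝ) * ε' * X < ε * (S * m) := by
    have h1 : (m:ℝ) * ε' * X = ε * ((m:ℝ) * clam) * (m:ℝ) * (X / (X + 1)) := by
      rw [hε'def]; ring
    have h2 : X / (X + 1) < 1 := by
      rw [div_lt_one hX1]; linarith
    have h3 : ε * ((m:ℝ) * clam) * (m:ℝ) * (X / (X + 1)) < ε * ((m:ℝ) * clam) * (m:ℝ) := by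
      nlinarith [mul_pos (mul_pos hε hmc) hmpos, div_nonneg hX hX1.le]
    have h4 : ε * ((m:ℝ) * clam) * (m:ℝ) ≤ ε * (S * m) := by
      have := mul_le_mul_of_nonneg_left hS hε.le
      nlinarith
    linarith [h1 ▸ h3]
  have hdiff : num / S - T / m = (num * m - S * T) / (S * m) := by
    field_simp
  rw [hdiff, abs_div, abs_of_pos (mul_pos hSpos hmpos)]
  rw [div_lt_iff₀ (mul_pos hSpos hmpos)]
  exact lt_of_le_of_lt hbound hlt
end

section
/- If $P$ is a primitive column-stochastic $n\times n$ matrix with right Perron eigenvector $\pi$ normalized so that $\mathbf{1}^\top\pi = 1$, then for iterations $x[k+1] = Px[k]$, $y[k+1]=Py[k]$ with $y[0]=\mathbf{1}$, the ratio $z_j[k] = x_j[k]/y_j[k]$ converges as $k\to\infty$ to $\frac{1}{n}\sum_{i=1}^n x_i[0]$ for every $j$. -/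
/-!
Since $x[k] = P^k x[0]$ and $y[k] = P^k \mathbf 1$, it suffices that every row of $P^k$ converges
to a constant vector with positive value. A row $r$ of $P^k$ evolves by $r \mapsto rP$, and since
$P$ is column-stochastic this replaces every entry by a convex combination of the entries: the
minimum of the row can only grow and its maximum only shrink. If every entry of $P^K$ is at least
$\delta > 0$, then $K$ steps shrink the spread $\max - \min$ by the factor $1 - n\delta < 1$
(Dobrushin's contraction), so minimum and maximum converge to a common limit, which is at least
$\delta$ because the rows of $P^k$ stay $\ge \delta$ for $k \ge K$.
-/

open Filter Topology Matrix

theorem Antitone.tendsto_zero_of_le_mul_add {f : ℕ → ℝ} (hf : Antitone f) (hf0 : ∀ k, 0 ≤ f k)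
    {K : ℕ} (hK : 0 < K) {c : ℝ} (hc0 : 0 ≤ c) (hc1 : c < 1)
    (hfK : ∀ k, f (k + K) ≤ c * f k) : Tendsto f atTop (𝓝 0) := by
  have hgeom : ∀ q, f (K * q) ≤ c ^ q * f 0 := by
    intro q
    induction q with
    | zero => simp
    | succ q ih =>
      calc f (K * (q + 1)) = f (K * q + K) := by rw [mul_add_one]
        _ ≤ c * f (K * q) := hfK _
        _ ≤ c * (c ^ q * f 0) := mul_le_mul_of_nonneg_left ih hc0
        _ = c ^ (q + 1) * f 0 := by ring
  have hbound : ∀ k, f k ≤ c ^ (k / K) * f 0 := fun k ↦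
    (hf (Nat.mul_div_le k K)).trans (hgeom _)
  have hlim : Tendsto (fun k ↦ c ^ (k / K) * f 0) atTop (𝓝 0) := by
    simpa using ((tendsto_pow_atTop_nhds_zero_of_lt_one hc0 hc1).comp
      (Nat.tendsto_div_const_atTop hK.ne')).mul_const (f 0)
  exact squeeze_zero hf0 hbound hlim

theorem exists_tendsto_of_monotone_of_antitone {m M : ℕ → ℝ} (hm : Monotone m) (hM : Antitone M)
    (hmM : ∀ k, m k ≤ M k) (hgap : Tendsto (M - m) atTop (𝓝 0)) :
    ∃ c, Tendsto m atTop (𝓝 c) ∧ Tendsto M atTop (𝓝 c) := by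
  have hm_lim := tendsto_atTop_ciSup hm
    ⟨M 0, by rintro _ ⟨k, rfl⟩; exact (hmM k).trans (hM k.zero_le)⟩
  exact ⟨_, hm_lim, by simpa using hm_lim.add hgap⟩

namespace Matrix

theorem eq_pow_mulVec_of_forall_succ {ι R : Type*} [Fintype ι] [DecidableEq ι] [Semiring R]
    {P : Matrix ι ι R} {x : ℕ → ι → R} (hx : ∀ k, x (k + 1) = P *ᵥ x k) (k : ℕ) :
    x k = P ^ k *ᵥ x 0 := by
  induction k with
  | zero => rw [pow_zero, one_mulVec]
  | succ k ih => rw [hx, ih, mulVec_mulVec, ← pow_succ']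

theorem tendsto_mulVec_apply {α m n : Type*} [Fintype n] {l : Filter α} {A : α → Matrix m n ℝ}
    {j : m} {a : ℝ} (h : ∀ i, Tendsto (fun t ↦ A t j i) l (𝓝 a)) (v : n → ℝ) :
    Tendsto (fun t ↦ (A t *ᵥ v) j) l (𝓝 (a * ∑ i, v i)) := by
  simpa [mulVec, dotProduct, Finset.mul_sum] using
    tendsto_finsetSum Finset.univ fun i _ ↦ (h i).mul_const (v i)

section Contraction

variable {ι : Type*} [Fintype ι] {Q : Matrix ι ι ℝ} {δ : ℝ}

theorem vecMul_apply_le_of_le (hδ : ∀ l i, δ ≤ Q l i) (hcol : ∀ i, ∑ l, Q l i = 1)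
    {v : ι → ℝ} {M : ℝ} (hv : ∀ l, v l ≤ M) (i : ι) :
    (v ᵥ* Q) i ≤ (1 - Fintype.card ι * δ) * M + δ * ∑ l, v l := by
  calc (v ᵥ* Q) i = ∑ l, v l * (Q l i - δ) + δ * ∑ l, v l := by
        simp only [vecMul, dotProduct, mul_sub, Finset.sum_sub_distrib, ← Finset.sum_mul]
        ring
    _ ≤ ∑ l, M * (Q l i - δ) + δ * ∑ l, v l := by
        gcongr with l
        · linarith [hδ l i]
        · exact hv l
    _ = (1 - Fintype.card ι * δ) * M + δ * ∑ l, v l := by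
        rw [← Finset.mul_sum, Finset.sum_sub_distrib, hcol]
        simp only [Finset.sum_const, Finset.card_univ, nsmul_eq_mul]
        ring

theorem le_vecMul_apply_of_le (hδ : ∀ l i, δ ≤ Q l i) (hcol : ∀ i, ∑ l, Q l i = 1)
    {v : ι → ℝ} {m : ℝ} (hv : ∀ l, m ≤ v l) (i : ι) :
    (1 - Fintype.card ι * δ) * m + δ * ∑ l, v l ≤ (v ᵥ* Q) i := by
  have h := vecMul_apply_le_of_le hδ hcol (v := -v) (M := -m) (fun l ↦ neg_le_neg (hv l)) i
  simp only [neg_vecMul, Pi.neg_apply, Finset.sum_neg_distrib] at h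
  linarith

theorem vecMul_apply_sub_vecMul_apply_le (hδ : ∀ l i, δ ≤ Q l i) (hcol : ∀ i, ∑ l, Q l i = 1)
    {v : ι → ℝ} {m M : ℝ} (hm : ∀ l, m ≤ v l) (hM : ∀ l, v l ≤ M) (i i' : ι) :
    (v ᵥ* Q) i - (v ᵥ* Q) i' ≤ (1 - Fintype.card ι * δ) * (M - m) := by
  linarith [vecMul_apply_le_of_le hδ hcol hM i, le_vecMul_apply_of_le hδ hcol hm i']

theorem iSup_vecMul_sub_iInf_vecMul_le [Nonempty ι] (hδ : ∀ l i, δ ≤ Q l i)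
    (hcol : ∀ i, ∑ l, Q l i = 1) (v : ι → ℝ) :
    (⨆ i, (v ᵥ* Q) i) - ⨅ i, (v ᵥ* Q) i ≤
      (1 - Fintype.card ι * δ) * ((⨆ i, v i) - ⨅ i, v i) := by
  have h := vecMul_apply_sub_vecMul_apply_le hδ hcol
    (fun l ↦ ciInf_le (Finite.bddBelow_range v) l) (fun l ↦ le_ciSup (Finite.bddAbove_range v) l)
  rw [sub_le_iff_le_add]
  exact ciSup_le fun i ↦ sub_le_iff_le_add'.mp (le_ciInf fun i' ↦ by linarith [h i i'])

end Contraction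

section ColStochastic

variable {ι : Type*} [Fintype ι] [DecidableEq ι] {P : Matrix ι ι ℝ}

theorem vecMul_apply_le (hP : P ∈ colStochastic ℝ ι) {v : ι → ℝ} {M : ℝ} (hv : ∀ l, v l ≤ M)
    (i : ι) : (v ᵥ* P) i ≤ M := by
  simpa using vecMul_apply_le_of_le (δ := 0) (fun _ _ ↦ nonneg_of_mem_colStochastic hP)
    (sum_col_of_mem_colStochastic hP) hv i

theorem le_vecMul_apply (hP : P ∈ colStochastic ℝ ι) {v : ι → ℝ} {m : ℝ} (hv : ∀ l, m ≤ v l)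
    (i : ι) : m ≤ (v ᵥ* P) i := by
  simpa using le_vecMul_apply_of_le (δ := 0) (fun _ _ ↦ nonneg_of_mem_colStochastic hP)
    (sum_col_of_mem_colStochastic hP) hv i

variable [Nonempty ι]

theorem exists_tendsto_vecMul_pow (hP : P ∈ colStochastic ℝ ι) {K : ℕ} (hK : 0 < K) {δ : ℝ}
    (hδ : 0 < δ) (hPK : ∀ i j, δ ≤ (P ^ K) i j) (v : ι → ℝ) :
    ∃ c, ∀ i, Tendsto (fun k ↦ (v ᵥ* P ^ k) i) atTop (𝓝 c) := by
  set u : ℕ → ι → ℝ := fun k ↦ v ᵥ* P ^ k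
  have hu : ∀ k t, u (k + t) = u k ᵥ* P ^ t := fun k t ↦ by simp only [u, pow_add, vecMul_vecMul]
  set m : ℕ → ℝ := fun k ↦ ⨅ i, u k i
  set M : ℕ → ℝ := fun k ↦ ⨆ i, u k i
  have hm_le : ∀ k i, m k ≤ u k i := fun k ↦ ciInf_le (Finite.bddBelow_range _)
  have hle_M : ∀ k i, u k i ≤ M k := fun k ↦ le_ciSup (Finite.bddAbove_range _)
  have hmM : ∀ k, m k ≤ M k := fun k ↦
    ciInf_le_ciSup (Finite.bddBelow_range _) (Finite.bddAbove_range _)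
  have hm : Monotone m := monotone_nat_of_le_succ fun k ↦
    le_ciInf fun i ↦ by rw [hu, pow_one]; exact le_vecMul_apply hP (hm_le k) i
  have hM : Antitone M := antitone_nat_of_succ_le fun k ↦
    ciSup_le fun i ↦ by rw [hu, pow_one]; exact vecMul_apply_le hP (hle_M k) i
  have hcol : ∀ i, ∑ l, (P ^ K) l i = 1 := sum_col_of_mem_colStochastic (pow_mem hP K)
  have hc0 : 0 ≤ 1 - Fintype.card ι * δ := by
    have h := Finset.sum_le_sum fun l (_ : l ∈ Finset.univ) ↦ hPK l (Classical.arbitrary ι)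
    rw [hcol, Finset.sum_const, Finset.card_univ, nsmul_eq_mul] at h
    linarith
  have hc1 : 1 - Fintype.card ι * δ < 1 := by
    have : (0 : ℝ) < Fintype.card ι := by exact_mod_cast Fintype.card_pos
    nlinarith
  have hgap : Tendsto (M - m) atTop (𝓝 0) := by
    have hanti : Antitone (M - m) := fun a b hab ↦ sub_le_sub (hM hab) (hm hab)
    refine hanti.tendsto_zero_of_le_mul_add (fun k ↦ sub_nonneg.2 (hmM k)) hK hc0 hc1 fun k ↦ ?_
    simpa only [Pi.sub_apply, M, m, hu k K] using iSup_vecMul_sub_iInf_vecMul_le hPK hcol (u k)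
  obtain ⟨c, hmc, hMc⟩ := exists_tendsto_of_monotone_of_antitone hm hM hmM hgap
  exact ⟨c, fun i ↦ tendsto_of_tendsto_of_tendsto_of_le_of_le hmc hMc (hm_le · i) (hle_M · i)⟩

theorem exists_tendsto_pow_apply (hP : P ∈ colStochastic ℝ ι) {K : ℕ} (hK : 0 < K)
    (hpos : ∀ i j, 0 < (P ^ K) i j) :
    ∃ c : ι → ℝ, (∀ i, 0 < c i) ∧ ∀ i j, Tendsto (fun k ↦ (P ^ k) i j) atTop (𝓝 (c i)) := by
  obtain ⟨⟨i₀, j₀⟩, hmin⟩ := Finite.exists_min fun p : ι × ι ↦ (P ^ K) p.1 p.2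
  set δ := (P ^ K) i₀ j₀
  have hPK : ∀ i j, δ ≤ (P ^ K) i j := fun i j ↦ hmin (i, j)
  have hrow : ∀ i k, (fun j ↦ (P ^ k) i j) = (1 : Matrix ι ι ℝ) i ᵥ* P ^ k := fun i k ↦ by
    rw [← mul_apply_eq_vecMul, one_mul]
  choose c hc using fun i ↦ exists_tendsto_vecMul_pow hP hK (hpos i₀ j₀) hPK ((1 : Matrix ι ι ℝ) i)
  have hlim : ∀ i j, Tendsto (fun k ↦ (P ^ k) i j) atTop (𝓝 (c i)) := fun i j ↦ by
    simpa only [← hrow] using hc i j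
  have hlow : ∀ k, K ≤ k → ∀ i j, δ ≤ (P ^ k) i j := fun k hk i j ↦ by
    rw [← Nat.add_sub_cancel' hk, pow_add, mul_apply_eq_vecMul]
    exact le_vecMul_apply (pow_mem hP _) (hPK i) j
  refine ⟨c, fun i ↦ ?_, hlim⟩
  exact (hpos i₀ j₀).trans_le <| ge_of_tendsto (hlim i (Classical.arbitrary ι))
    ((eventually_ge_atTop K).mono fun k hk ↦ hlow k hk i (Classical.arbitrary ι))

end ColStochastic

end Matrix

theorem ratio_consensus_converges_general
    (n : ℕ)
    (P : Matrix (Fin n) (Fin n) ℝ)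
    (hPnonneg : ∀ i j, 0 ≤ P i j)
    (hPcol : ∀ i, ∑ j, P j i = 1)
    (hprim : ∃ K : ℕ, 1 ≤ K ∧ ∀ i j, 0 < (P ^ K) i j)
    (x y : ℕ → Fin n → ℝ)
    (hx : ∀ k, x (k + 1) = P.mulVec (x k))
    (hy : ∀ k, y (k + 1) = P.mulVec (y k))
    (hy0 : ∀ i, y 0 i = 1) :
    ∀ j, Filter.Tendsto (fun k => x k j / y k j) Filter.atTop
      (nhds ((∑ i, x 0 i) / n)) := by
  intro j
  have : Nonempty (Fin n) := ⟨j⟩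
  obtain ⟨K, hK, hpos⟩ := hprim
  obtain ⟨c, hc, hlim⟩ :=
    exists_tendsto_pow_apply (mem_colStochastic_iff_sum.2 ⟨hPnonneg, hPcol⟩) hK hpos
  have hxlim := tendsto_mulVec_apply (hlim j) (x 0)
  have hylim := tendsto_mulVec_apply (hlim j) (y 0)
  simp only [← eq_pow_mulVec_of_forall_succ hx, ← eq_pow_mulVec_of_forall_succ hy, hy0,
    Finset.sum_const, Finset.card_univ, Fintype.card_fin, nsmul_eq_mul, mul_one] at hxlim hylim
  have hlim_ratio := hxlim.div hylim (mul_pos (hc j) (Nat.cast_pos.2 j.pos)).ne'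
  rwa [mul_div_mul_left _ _ (hc j).ne'] at hlim_ratio

/-- Convergence of the basic (delay-free) Ratio Consensus algorithm: for a primitive
column-stochastic matrix `P` with right Perron eigenvector `π` normalized to
`1ᵀπ = 1`, the iterations `x[k+1] = Px[k]`, `y[k+1] = Py[k]` with `y[0] = 1` give
ratios converging to the average of the initial values. -/
theorem ratio_consensus_converges
    (n : ℕ) (hn : 1 ≤ n)
    (P : Matrix (Fin n) (Fin n) ℝ)
    (hPnonneg : ∀ i j, 0 ≤ P i j)
    (hPcol : ∀ i, ∑ j, P j i = 1)
    (hprim : ∃ K : ℕ, 1 ≤ K ∧ ∀ i j, 0 < (P ^ K) i j)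
    (π : Fin n → ℝ)
    (hπeig : P.mulVec π = π)
    (hπnorm : ∑ i, π i = 1)
    (x y : ℕ → Fin n → ℝ)
    (hx : ∀ k, x (k + 1) = P.mulVec (x k))
    (hy : ∀ k, y (k + 1) = P.mulVec (y k))
    (hy0 : ∀ i, y 0 i = 1) :
    ∀ j, Filter.Tendsto (fun k => x k j / y k j) Filter.atTop
      (nhds ((∑ i, x 0 i) / n)) :=
  ratio_consensus_converges_general n P hPnonneg hPcol hprim x y hx hy hy0
end
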